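/- arXiv:2307.14034 — 3 statements merged into one kernel-verified Lean document; each statement's English description precedes it below -/
import Mathlib

section
/- Let P be a symmetric positive definite n×n real matrix and Q satisfy Q + Q^T = diag(-1,0,...,0,1). If u : ℝ → ℝ^n solves the ODE u'(t) = -P⁻¹ Q u(t), then the energy E(t) = u(t)^T P u(t) satisfies E'(t) = u_0(t)^2 - u_{n-1}(t)^2. -/
/-!
Differentiating the quadratic form gives `E' = 2 uᵀ P u'`, and `P u' = -Q u` because `P` is
symmetric and cancels `P⁻¹`. Hence `E' = -2 uᵀ Q u = -uᵀ (Q + Qᵀ) u`, which the SBP property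
reduces to the two boundary terms.
-/

open Matrix

section Calculus

variable {𝕜 : Type*} [NontriviallyNormedField 𝕜] {m ι : Type*} [Fintype ι]
  {u v : 𝕜 → ι → 𝕜} {u' v' : ι → 𝕜} {t : 𝕜}

theorem HasDerivAt.dotProduct (hu : HasDerivAt u u' t) (hv : HasDerivAt v v' t) :
    HasDerivAt (fun s => u s ⬝ᵥ v s) (u' ⬝ᵥ v t + u t ⬝ᵥ v') t := by
  refine (HasDerivAt.fun_sum (u := Finset.univ) fun i _ =>
    (hasDerivAt_pi.1 hu i).fun_mul (hasDerivAt_pi.1 hv i)).congr_deriv ?_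
  exact Finset.sum_add_distrib

theorem HasDerivAt.const_mulVec (A : Matrix m ι 𝕜) (hu : HasDerivAt u u' t) :
    HasDerivAt (fun s => A *ᵥ u s) (A *ᵥ u') t :=
  hasDerivAt_pi.2 fun i =>
    HasDerivAt.fun_sum (u := Finset.univ) fun j _ => (hasDerivAt_pi.1 hu j).const_mul (A i j)

end Calculus

section Algebra

variable {R ι : Type*} [CommRing R] [Fintype ι]

theorem Matrix.IsSymm.dotProduct_mulVec_comm {P : Matrix ι ι R} (hP : P.IsSymm) (v w : ι → R) :
    v ⬝ᵥ P *ᵥ w = w ⬝ᵥ P *ᵥ v := by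
  rw [dotProduct_mulVec, ← mulVec_transpose, hP.eq, dotProduct_comm]

theorem Matrix.dotProduct_add_transpose_mulVec_self (A : Matrix ι ι R) (v : ι → R) :
    v ⬝ᵥ (A + Aᵀ) *ᵥ v = 2 * (v ⬝ᵥ A *ᵥ v) := by
  rw [add_mulVec, dotProduct_add, mulVec_transpose, dotProduct_comm v (v ᵥ* A), ← dotProduct_mulVec,
    two_mul]

theorem Matrix.dotProduct_mulVec_inv_mul [DecidableEq ι] {P : Matrix ι ι R} (hP : IsUnit P.det)
    (Q : Matrix ι ι R) (v w : ι → R) : v ⬝ᵥ P *ᵥ (P⁻¹ * Q) *ᵥ w = v ⬝ᵥ Q *ᵥ w := by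
  rw [mulVec_mulVec, mul_nonsing_inv_cancel_left P Q hP]

theorem Matrix.dotProduct_diagonal_mulVec_self [DecidableEq ι] (d v : ι → R) :
    v ⬝ᵥ diagonal d *ᵥ v = ∑ i, d i * v i ^ 2 := by
  simp only [dotProduct, mulVec_diagonal]
  exact Finset.sum_congr rfl fun i _ => by ring

theorem Matrix.dotProduct_diagonal_ite_ite_mulVec_self [DecidableEq ι] {i j : ι} (hij : i ≠ j)
    (a b : R) (v : ι → R) :
    v ⬝ᵥ diagonal (fun k => if k = i then a else if k = j then b else 0) *ᵥ v
      = a * v i ^ 2 + b * v j ^ 2 := by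
  rw [dotProduct_diagonal_mulVec_self, Fintype.sum_eq_add i j hij fun k ⟨hki, hkj⟩ => by simp [hki, hkj]]
  simp [hij.symm]

end Algebra

theorem sbp_energy_rate (n : ℕ) (P Q : Matrix (Fin (n + 2)) (Fin (n + 2)) ℝ)
    (hP : P.PosDef)
    (hQ : Q + Qᵀ = Matrix.diagonal (fun i =>
      if i = 0 then (-1 : ℝ) else if i = Fin.last (n + 1) then 1 else 0))
    (u : ℝ → (Fin (n + 2) → ℝ))
    (hu : ∀ t, HasDerivAt u (-(P⁻¹ * Q).mulVec (u t)) t) :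
    ∀ t, HasDerivAt (fun s => u s ⬝ᵥ P.mulVec (u s))
      (u t 0 ^ 2 - u t (Fin.last (n + 1)) ^ 2) t := by
  intro t
  have hsymm : P.IsSymm := isHermitian_iff_isSymm.1 hP.isHermitian
  have hdet : IsUnit P.det := (isUnit_iff_isUnit_det P).1 hP.isUnit
  have hboundary : 2 * (u t ⬝ᵥ Q *ᵥ u t) = -u t 0 ^ 2 + u t (Fin.last (n + 1)) ^ 2 := by
    rw [← dotProduct_add_transpose_mulVec_self, hQ,
      dotProduct_diagonal_ite_ite_mulVec_self Fin.last_pos.ne]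
    ring
  refine ((hu t).dotProduct ((hu t).const_mulVec P)).congr_deriv ?_
  rw [hsymm.dotProduct_mulVec_comm, mulVec_neg, dotProduct_neg, dotProduct_mulVec_inv_mul hdet]
  linarith
end

section
/- Let P and P* be symmetric positive definite n×n matrices and set u* = 2(I + P⁻¹P*)⁻¹ u at the transmission time. If P = diag(p_i) and P* = diag(p*_i) are diagonal with positive entries, then I + P⁻¹P* is invertible, u*_i = 2 p_i/(p_i + p*_i) · u_i, and p*_i (u*_i)² ≤ p_i u_i² · (4 p_i p*_i)/(p_i + p*_i)² ≤ p_i u_i², hence ‖u*‖²_{P*} ≤ ‖u‖²_P. -/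
open Matrix

theorem stable_transmission_diagonal (n : ℕ) (p p' : Fin n → ℝ)
    (hp : ∀ i, 0 < p i) (hp' : ∀ i, 0 < p' i) (u ustar : Fin n → ℝ)
    (hustar : ustar =
      (2 : ℝ) • ((1 + (Matrix.diagonal p)⁻¹ * Matrix.diagonal p')⁻¹).mulVec u) :
    IsUnit (1 + (Matrix.diagonal p)⁻¹ * Matrix.diagonal p')
      ∧ (∀ i, ustar i = 2 * p i / (p i + p' i) * u i)
      ∧ (∀ i, p' i * ustar i ^ 2
            ≤ p i * u i ^ 2 * (4 * p i * p' i / (p i + p' i) ^ 2)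
          ∧ p i * u i ^ 2 * (4 * p i * p' i / (p i + p' i) ^ 2) ≤ p i * u i ^ 2)
      ∧ ustar ⬝ᵥ (Matrix.diagonal p').mulVec ustar
          ≤ u ⬝ᵥ (Matrix.diagonal p).mulVec u := by
  have hpne : ∀ i, p i ≠ 0 := fun i => (hp i).ne'
  have hsum : ∀ i, 0 < p i + p' i := fun i => add_pos (hp i) (hp' i)
  have hsne : ∀ i, p i + p' i ≠ 0 := fun i => (hsum i).ne'
  have hinv : (Matrix.diagonal p)⁻¹ = Matrix.diagonal (fun i => (p i)⁻¹) := by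
    apply Matrix.inv_eq_right_inv
    rw [Matrix.diagonal_mul_diagonal,
      show (fun i => p i * (p i)⁻¹) = fun _ => (1 : ℝ) from
        funext fun i => mul_inv_cancel₀ (hpne i), Matrix.diagonal_one]
  have hM : (1 : Matrix (Fin n) (Fin n) ℝ) + (Matrix.diagonal p)⁻¹ * Matrix.diagonal p'
      = Matrix.diagonal (fun i => (p i + p' i) / p i) := by
    rw [hinv, Matrix.diagonal_mul_diagonal]
    ext i j
    by_cases h : i = j
    · subst h
      simp [Matrix.diagonal_apply_eq]
      rw [inv_mul_eq_div, add_div, div_self (hpne i)]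
    · simp [Matrix.one_apply_ne h, Matrix.diagonal_apply_ne _ h]
  have hdne : ∀ i, (p i + p' i) / p i ≠ 0 := fun i =>
    div_ne_zero (hsne i) (hpne i)
  have hunit : IsUnit ((1 : Matrix (Fin n) (Fin n) ℝ) + (Matrix.diagonal p)⁻¹ * Matrix.diagonal p') := by
    rw [hM, Matrix.isUnit_iff_isUnit_det, Matrix.det_diagonal]
    exact isUnit_iff_ne_zero.2 (Finset.prod_ne_zero_iff.2 fun i _ => hdne i)
  have hMinv : ((1 : Matrix (Fin n) (Fin n) ℝ) + (Matrix.diagonal p)⁻¹ * Matrix.diagonal p')⁻¹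
      = Matrix.diagonal (fun i => p i / (p i + p' i)) := by
    rw [hM]
    apply Matrix.inv_eq_right_inv
    rw [Matrix.diagonal_mul_diagonal,
      show (fun i => (p i + p' i) / p i * (p i / (p i + p' i))) = fun _ => (1 : ℝ) from
        funext fun i => by
          rw [div_mul_div_comm, mul_comm (p i + p' i) (p i),
            div_self (mul_ne_zero (hpne i) (hsne i))], Matrix.diagonal_one]
  have hcomp : ∀ i, ustar i = 2 * p i / (p i + p' i) * u i := by
    intro i
    rw [hustar, hMinv]
    simp [Matrix.mulVec_diagonal]
    ring
  have hineq : ∀ i, p' i * ustar i ^ 2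
      ≤ p i * u i ^ 2 * (4 * p i * p' i / (p i + p' i) ^ 2)
    ∧ p i * u i ^ 2 * (4 * p i * p' i / (p i + p' i) ^ 2) ≤ p i * u i ^ 2 := by
    intro i
    constructor
    · rw [hcomp i]
      have : p' i * (2 * p i / (p i + p' i) * u i) ^ 2
          = p i * u i ^ 2 * (4 * p i * p' i / (p i + p' i) ^ 2) := by
        field_simp
        ring
      rw [this]
    · have h4 : 4 * p i * p' i ≤ (p i + p' i) ^ 2 := by nlinarith [sq_nonneg (p i - p' i)]
      have hfrac : 4 * p i * p' i / (p i + p' i) ^ 2 ≤ 1 :=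
        (div_le_one (pow_pos (hsum i) 2)).2 h4
      calc p i * u i ^ 2 * (4 * p i * p' i / (p i + p' i) ^ 2)
          ≤ p i * u i ^ 2 * 1 := by
            apply mul_le_mul_of_nonneg_left hfrac (mul_nonneg (hp i).le (sq_nonneg _))
        _ = p i * u i ^ 2 := mul_one _
  refine ⟨hunit, hcomp, hineq, ?_⟩
  have h1 : ustar ⬝ᵥ (Matrix.diagonal p').mulVec ustar = ∑ i, p' i * ustar i ^ 2 := by
    simp [dotProduct, Matrix.mulVec_diagonal]
    apply Finset.sum_congr rfl
    intro i _
    ring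
  have h2 : u ⬝ᵥ (Matrix.diagonal p).mulVec u = ∑ i, p i * u i ^ 2 := by
    simp [dotProduct, Matrix.mulVec_diagonal]
    apply Finset.sum_congr rfl
    intro i _
    ring
  rw [h1, h2]
  exact Finset.sum_le_sum fun i _ => le_trans (hineq i).1 (hineq i).2
end

section
/- Let P be symmetric positive definite and Q + Qᵀ = diag(-1,0,...,0,1). For the single-block scheme with inflow boundary condition g(t): u' = -P⁻¹Q u - σ P⁻¹ (u_0 - g) e_0, the energy satisfies d/dt ‖u‖²_P = u_0² - u_{n-1}² - 2σ u_0(u_0 - g). For σ = 1 and g = 0 this gives d/dt ‖u‖²_P = -u_0² - u_{n-1}² ≤ 0. -/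
open Matrix

theorem sbp_sat_energy_rate_inflow (n : ℕ)
    (P Q : Matrix (Fin (n + 2)) (Fin (n + 2)) ℝ) (hP : P.PosDef)
    (hQ : Q + Qᵀ = Matrix.diagonal (fun i =>
      if i = 0 then (-1 : ℝ) else if i = Fin.last (n + 1) then 1 else 0))
    (σ : ℝ) (g : ℝ → ℝ) (u : ℝ → (Fin (n + 2) → ℝ))
    (hu : ∀ t, HasDerivAt u
      (-(P⁻¹ * Q).mulVec (u t)
        - σ • P⁻¹.mulVec ((u t 0 - g t) • (Pi.single 0 1 : Fin (n + 2) → ℝ))) t) :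
    (∀ t, HasDerivAt (fun s => u s ⬝ᵥ P.mulVec (u s))
        (u t 0 ^ 2 - u t (Fin.last (n + 1)) ^ 2
          - 2 * σ * u t 0 * (u t 0 - g t)) t)
      ∧ (σ = 1 → (∀ t, g t = 0) →
          ∀ t, HasDerivAt (fun s => u s ⬝ᵥ P.mulVec (u s))
            (-u t 0 ^ 2 - u t (Fin.last (n + 1)) ^ 2) t
            ∧ -u t 0 ^ 2 - u t (Fin.last (n + 1)) ^ 2 ≤ 0) := by
  have hPinv : P * P⁻¹ = 1 :=
    Matrix.mul_nonsing_inv P (isUnit_iff_ne_zero.mpr (ne_of_gt hP.det_pos))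
  have hPsymm : Pᵀ = P := by
    have := hP.1
    rwa [Matrix.IsHermitian, conjTranspose_eq_transpose_of_trivial] at this
  have hlast : (Fin.last (n + 1) : Fin (n + 2)) ≠ 0 := by
    simp [Fin.ext_iff, Fin.last]
  have main : ∀ t, HasDerivAt (fun s => u s ⬝ᵥ P.mulVec (u s))
      (u t 0 ^ 2 - u t (Fin.last (n + 1)) ^ 2
        - 2 * σ * u t 0 * (u t 0 - g t)) t := by
    intro t
    set D : Fin (n + 2) → ℝ :=
      -(P⁻¹ * Q).mulVec (u t)
        - σ • P⁻¹.mulVec ((u t 0 - g t) • (Pi.single 0 1 : Fin (n + 2) → ℝ)) with hD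
    have hcomp : ∀ i, HasDerivAt (fun s => u s i) (D i) t := hasDerivAt_pi.mp (hu t)
    -- derivative as bilinear product rule
    have hder : HasDerivAt (fun s => u s ⬝ᵥ P.mulVec (u s))
        (D ⬝ᵥ P.mulVec (u t) + u t ⬝ᵥ P.mulVec D) t := by
      have h1 : HasDerivAt (fun s => ∑ i, u s i * ∑ j, P i j * u s j)
          (∑ i, (D i * ∑ j, P i j * u t j + u t i * ∑ j, P i j * D j)) t := by
        apply HasDerivAt.fun_sum
        intro i _
        exact (hcomp i).mul (HasDerivAt.fun_sum fun j _ => (hcomp j).const_mul (P i j))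
      have heq : (fun s => u s ⬝ᵥ P.mulVec (u s))
          = fun s => ∑ i, u s i * ∑ j, P i j * u s j := by
        funext s; simp [dotProduct, Matrix.mulVec]
      rw [heq]
      convert h1 using 1
      simp [dotProduct, Matrix.mulVec, Finset.sum_add_distrib]
    -- compute P * D
    have hPD : P.mulVec D = -(Q.mulVec (u t))
        - σ • ((u t 0 - g t) • (Pi.single 0 1 : Fin (n + 2) → ℝ)) := by
      rw [hD, Matrix.mulVec_sub, Matrix.mulVec_neg, Matrix.mulVec_smul,
        Matrix.mulVec_mulVec, Matrix.mulVec_mulVec, ← Matrix.mul_assoc, hPinv,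
        Matrix.one_mul, Matrix.one_mulVec]
    -- symmetry step: D ⬝ᵥ P u = P D ⬝ᵥ u
    have hsym : D ⬝ᵥ P.mulVec (u t) = P.mulVec D ⬝ᵥ u t := by
      rw [Matrix.dotProduct_mulVec]
      conv_lhs => rw [← hPsymm]
      rw [Matrix.vecMul_transpose]
    -- quadratic form of Q + Qᵀ
    have hquad : Q.mulVec (u t) ⬝ᵥ u t + u t ⬝ᵥ Q.mulVec (u t)
        = u t ⬝ᵥ ((Q + Qᵀ).mulVec (u t)) := by
      rw [Matrix.add_mulVec, dotProduct_add]
      congr 1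
      · rw [dotProduct_comm]
      · conv_rhs => rw [Matrix.dotProduct_mulVec, Matrix.vecMul_transpose]
        rw [dotProduct_comm]
    have hdiag : u t ⬝ᵥ ((Q + Qᵀ).mulVec (u t))
        = -(u t 0 ^ 2) + u t (Fin.last (n + 1)) ^ 2 := by
      rw [hQ]
      have : ∀ i : Fin (n + 2), u t i * ((Matrix.diagonal (fun i =>
          if i = 0 then (-1 : ℝ) else if i = Fin.last (n + 1) then 1 else 0)).mulVec (u t)) i
          = (if i = 0 then -(u t 0 ^ 2) else 0)
            + (if i = Fin.last (n + 1) then u t (Fin.last (n + 1)) ^ 2 else 0) := by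
        intro i
        rw [Matrix.mulVec_diagonal]
        by_cases h0 : i = 0
        · subst h0
          simp [hlast.symm]
          ring
        · by_cases hl : i = Fin.last (n + 1)
          · subst hl
            simp [h0]
            ring
          · simp [h0, hl]
      simp only [dotProduct]
      rw [Finset.sum_congr rfl (fun i _ => this i), Finset.sum_add_distrib]
      simp
    -- put everything together
    have hval : D ⬝ᵥ P.mulVec (u t) + u t ⬝ᵥ P.mulVec D
        = u t 0 ^ 2 - u t (Fin.last (n + 1)) ^ 2 - 2 * σ * u t 0 * (u t 0 - g t) := by
      rw [hsym, hPD]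
      rw [sub_dotProduct, neg_dotProduct, smul_dotProduct,
        smul_dotProduct, single_dotProduct,
        dotProduct_sub, dotProduct_neg, dotProduct_smul,
        dotProduct_smul, dotProduct_single]
      have : Q.mulVec (u t) ⬝ᵥ u t + u t ⬝ᵥ Q.mulVec (u t)
          = -(u t 0 ^ 2) + u t (Fin.last (n + 1)) ^ 2 := hquad.trans hdiag
      simp only [smul_eq_mul]
      nlinarith [this]
    rw [← hval]
    exact hder
  refine ⟨main, fun hσ hg t => ⟨?_, ?_⟩⟩
  · have := main t
    rw [hσ, hg t] at this
    convert this using 1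
    ring
  · nlinarith [sq_nonneg (u t 0), sq_nonneg (u t (Fin.last (n + 1)))]
end
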